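/- arXiv:1402.2202 — 10 statements merged into one kernel-verified Lean document; each statement's English description precedes it below -/
import Mathlib

section
/- The natural density of the set of squarefree integers in ℤ equals 1/ζ(2); precisely, the number of squarefree integers n with |n| ≤ R, divided by 2R, tends to 6/π² as R → ∞. -/
/-!
Since `∑_{d² ∣ n} μ d` is `1` for squarefree `n` and `0` otherwise, the number of squarefree
`n ∈ [1, N]` is `∑_{d ≤ N} μ d ⌊N / d²⌋`. Dividing by `N`, each term tends to `μ d / d²` and is
dominated by `1 / d²`, so the proportion tends to `∑ μ d / d² = 1 / ζ(2) = 6 / π²`. Negating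
doubles the count and `0` is not squarefree, so the same holds on `[-R, R]` relative to `2R`.
-/

open Filter
open scoped Classical

open Finset ArithmeticFunction
open scoped ArithmeticFunction.Moebius Topology

theorem Nat.dvd_of_sq_dvd_sq_mul_squarefree {a b d : ℕ} (ha : Squarefree a)
    (h : d ^ 2 ∣ b ^ 2 * a) : d ∣ b := by
  rcases eq_or_ne b 0 with rfl | hb
  · exact dvd_zero d
  have hba : b ^ 2 * a ≠ 0 := mul_ne_zero (pow_ne_zero 2 hb) ha.ne_zero
  have hd : d ≠ 0 := by rintro rfl; simp_all
  rw [← Nat.factorization_le_iff_dvd hd hb]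
  intro p
  have hp := (Nat.factorization_le_iff_dvd (pow_ne_zero 2 hd) hba).mpr h p
  simp only [Nat.factorization_mul (pow_ne_zero 2 hb) ha.ne_zero, Nat.factorization_pow,
    Finsupp.add_apply, Finsupp.smul_apply, smul_eq_mul] at hp
  have := ha.natFactorization_le_one p
  omega

theorem sum_divisors_moebius_eq_ite (n : ℕ) :
    ∑ d ∈ n.divisors, (μ d : ℤ) = if n = 1 then 1 else 0 := by
  rw [← coe_mul_zeta_apply, moebius_mul_coe_zeta, one_apply]

/-- Writing `n = b² a` with `a` squarefree, the `d` with `d² ∣ n` are exactly the divisors of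
`b`, and `n` is squarefree iff `b = 1`. -/
theorem sum_moebius_of_sq_dvd_eq_ite {n N : ℕ} (hn : n ≠ 0) (hnN : n ≤ N) :
    ∑ d ∈ Icc 1 N with d ^ 2 ∣ n, (μ d : ℤ) = if Squarefree n then 1 else 0 := by
  obtain ⟨a, b, rfl, ha⟩ := Nat.sq_mul_squarefree n
  have hb : b ≠ 0 := by rintro rfl; simp at hn
  have hdiv : {d ∈ Icc 1 N | d ^ 2 ∣ b ^ 2 * a} = b.divisors := by
    ext d
    simp only [mem_filter, mem_Icc, Nat.mem_divisors, and_iff_left hb]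
    refine ⟨fun h => Nat.dvd_of_sq_dvd_sq_mul_squarefree ha h.2, fun h => ⟨⟨?_, ?_⟩, ?_⟩⟩
    · exact Nat.pos_of_dvd_of_pos h (Nat.pos_of_ne_zero hb)
    · exact (Nat.le_of_dvd (Nat.pos_of_ne_zero hn)
        ((h.trans (dvd_pow_self b two_ne_zero)).mul_right a)).trans hnN
    · exact (pow_dvd_pow_of_dvd h 2).mul_right a
  have hsq : Squarefree (b ^ 2 * a) ↔ b = 1 := by
    refine ⟨fun h => Nat.isUnit_iff.mp (h b ?_), by rintro rfl; simpa using ha⟩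
    exact ⟨a, by ring⟩
  rw [hdiv, sum_divisors_moebius_eq_ite, if_congr hsq rfl rfl]

theorem card_filter_squarefree_Icc_eq_sum_moebius (N : ℕ) :
    (#{n ∈ Icc 1 N | Squarefree n} : ℤ) = ∑ d ∈ Icc 1 N, (μ d : ℤ) * (N / d ^ 2 : ℕ) := by
  calc (#{n ∈ Icc 1 N | Squarefree n} : ℤ)
      = ∑ n ∈ Icc 1 N, ∑ d ∈ Icc 1 N with d ^ 2 ∣ n, (μ d : ℤ) := by
        rw [natCast_card_filter]
        refine sum_congr rfl fun n hn => ?_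
        rw [mem_Icc] at hn
        exact (sum_moebius_of_sq_dvd_eq_ite (by omega) hn.2).symm
    _ = ∑ d ∈ Icc 1 N, ∑ n ∈ Icc 1 N with d ^ 2 ∣ n, (μ d : ℤ) := by
        simp_rw [sum_filter]
        exact sum_comm
    _ = ∑ d ∈ Icc 1 N, (μ d : ℤ) * (N / d ^ 2 : ℕ) := by
        refine sum_congr rfl fun d _ => ?_
        rw [sum_const, show Icc 1 N = Ioc 0 N from Icc_add_one_left_eq_Ioc 0 N,
          Nat.Ioc_filter_dvd_card_eq_div, nsmul_eq_mul, mul_comm]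

theorem tendsto_natCast_div_div_natCast {k : ℕ} (hk : 0 < k) :
    Tendsto (fun N : ℕ => ((N / k : ℕ) : ℝ) / N) atTop (𝓝 (1 / k)) := by
  have h := ((tendsto_mod_div_atTop_nhds_zero_nat hk).const_sub 1).div_const (k : ℝ)
  rw [sub_zero] at h
  refine h.congr' ?_
  filter_upwards [eventually_ne_atTop 0] with N hN
  have hdiv : ((k * (N / k) + N % k : ℕ) : ℝ) = N := by rw [Nat.div_add_mod]
  push_cast at hdiv
  field_simp
  linarith

theorem natCast_div_div_le (N k : ℕ) : ((N / k : ℕ) : ℝ) / N ≤ 1 / k := by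
  rcases eq_or_ne N 0 with rfl | hN
  · simp
  calc ((N / k : ℕ) : ℝ) / N ≤ (N / k) / N := by gcongr; exact Nat.cast_div_le
    _ = 1 / k := by field_simp

theorem tendsto_card_filter_squarefree_Icc_div_self :
    Tendsto (fun N : ℕ => (#{n ∈ Icc 1 N | Squarefree n} : ℝ) / N) atTop
      (𝓝 (∑' d : ℕ, (μ d : ℝ) / (d : ℝ) ^ 2)) := by
  have hsum (N : ℕ) : (#{n ∈ Icc 1 N | Squarefree n} : ℝ) / N
      = ∑' d : ℕ, (μ d : ℝ) * (((N / d ^ 2 : ℕ) : ℝ) / N) := by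
    have hcount := congrArg (Int.cast : ℤ → ℝ) (card_filter_squarefree_Icc_eq_sum_moebius N)
    simp only [Int.cast_natCast, Int.cast_sum, Int.cast_mul] at hcount
    rw [hcount, sum_div, tsum_eq_sum (s := Icc 1 N)]
    · simp only [mul_div_assoc]
    · intro d hd
      rcases eq_or_ne d 0 with rfl | hd0
      · simp
      have hNd : N < d ^ 2 := by
        have := Nat.le_self_pow two_ne_zero d
        simp only [mem_Icc, not_and_or] at hd
        omega
      simp [Nat.div_eq_of_lt hNd]
  simp only [hsum]
  refine tendsto_tsum_of_dominated_convergence (bound := fun d : ℕ => 1 / (d : ℝ) ^ 2)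
    (Real.summable_one_div_nat_pow.mpr one_lt_two) (fun d => ?_) (.of_forall fun N d => ?_)
  · rcases eq_or_ne d 0 with rfl | hd
    · simp
    rw [div_eq_mul_one_div _ ((d : ℝ) ^ 2)]
    have h := (tendsto_natCast_div_div_natCast (k := d ^ 2) (by positivity)).const_mul (μ d : ℝ)
    rwa [Nat.cast_pow] at h
  · have hbound : ((N / d ^ 2 : ℕ) : ℝ) / N ≤ 1 / (d : ℝ) ^ 2 := by
      rw [← Nat.cast_pow]
      exact natCast_div_div_le N (d ^ 2)
    rw [norm_mul, Real.norm_eq_abs, Real.norm_of_nonneg (by positivity), ← one_mul (1 / _)]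
    exact mul_le_mul (mod_cast abs_moebius_le_one) hbound (by positivity) zero_le_one

theorem tsum_moebius_div_pow_eq_inv_riemannZeta {k : ℕ} (hk : 1 < k) :
    ((∑' d : ℕ, (μ d : ℝ) / (d : ℝ) ^ k : ℝ) : ℂ) = (riemannZeta k)⁻¹ := by
  have hre : 1 < (k : ℂ).re := by simpa using hk
  have hL := LSeries_zeta_mul_Lseries_moebius hre
  rw [LSeries_zeta_eq_riemannZeta hre] at hL
  rw [← eq_inv_of_mul_eq_one_right hL, LSeries, Complex.ofReal_tsum]
  refine tsum_congr fun d => ?_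
  rcases eq_or_ne d 0 with rfl | hd
  · simp
  · rw [LSeries.term_of_ne_zero hd, Complex.cpow_natCast]
    push_cast
    rfl

theorem tsum_moebius_div_sq : ∑' d : ℕ, (μ d : ℝ) / (d : ℝ) ^ 2 = 6 / Real.pi ^ 2 := by
  have h := tsum_moebius_div_pow_eq_inv_riemannZeta one_lt_two
  rw [Nat.cast_ofNat, riemannZeta_two, inv_div] at h
  exact_mod_cast h

theorem card_filter_natAbs_Icc_neg_self (P : ℕ → Prop) [DecidablePred P] (h0 : ¬P 0) (R : ℕ) :
    #{n ∈ Icc (-(R : ℤ)) R | P n.natAbs} = 2 * #{m ∈ Icc 1 R | P m} := by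
  rw [card_eq_sum_card_fiberwise (f := Int.natAbs) (t := {m ∈ Icc 1 R | P m}), mul_comm,
    ← smul_eq_mul, ← sum_const]
  · refine sum_congr rfl fun m hm => ?_
    simp only [mem_filter, mem_Icc] at hm
    have hfiber : {n ∈ {n ∈ Icc (-(R : ℤ)) R | P n.natAbs} | n.natAbs = m}
        = {(m : ℤ), -(m : ℤ)} := by
      ext n
      simp only [mem_filter, mem_Icc, mem_insert, mem_singleton]
      constructor
      · rintro ⟨-, rfl⟩
        omega
      · rintro (rfl | rfl) <;> simp [hm.2] <;> omega
    rw [hfiber, card_pair (by omega)]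
  · intro n hn
    simp only [coe_filter, Set.mem_ofPred_eq, mem_Icc] at hn ⊢
    have : n ≠ 0 := by rintro rfl; exact h0 hn.2
    exact ⟨by omega, hn.2⟩

/-- The natural density of the squarefree integers equals 1/ζ(2) = 6/π². -/
theorem squarefree_integers_density :
    Tendsto
      (fun R : ℕ =>
        (((Finset.Icc (-(R : ℤ)) (R : ℤ)).filter (fun n => Squarefree n)).card : ℝ)
          / (2 * R))
      atTop (nhds (6 / Real.pi ^ 2)) := by
  have hsymm (R : ℕ) :
      #{n ∈ Icc (-(R : ℤ)) R | Squarefree n} = 2 * #{m ∈ Icc 1 R | Squarefree m} := by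
    simp only [← Int.squarefree_natAbs]
    exact card_filter_natAbs_Icc_neg_self Squarefree not_squarefree_zero R
  rw [← tsum_moebius_div_sq]
  refine tendsto_card_filter_squarefree_Icc_div_self.congr fun R => ?_
  rw [hsymm, Nat.cast_mul, Nat.cast_two, mul_div_mul_left _ _ two_ne_zero]
end

section
/- The natural density of the set of k-free integers equals 1/ζ(k) for every integer k ≥ 2; precisely, |{n ∈ ℕ : n ≤ R, n is k-free}|/R → 1/ζ(k) as R → ∞. -/
/-!
Since `d ^ k ∣ n ↔ d ∣ Nat.floorRoot k n` and `Nat.floorRoot k n = 1` exactly when `n` is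
`k`-free, Möbius inversion gives `∑_{d ^ k ∣ n} μ d = [n is k-free]`, hence
`#{n ≤ R | n is k-free} = ∑_{d ≤ R} μ d ⌊R / d ^ k⌋`. After division by `R` the `d`-th term tends
to `μ d / d ^ k` and is bounded by `1 / d ^ k`, which is summable for `k ≥ 2`; by dominated
convergence the density is `∑ μ d / d ^ k = 1 / ζ(k)`.
-/

open Filter
open scoped Classical

open Finset ArithmeticFunction ArithmeticFunction.Moebius Topology
open scoped LSeries.notation

namespace Nat

def PowFree (k n : ℕ) : Prop := ∀ p : ℕ, p.Prime → ¬ p ^ k ∣ n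

theorem powFree_iff_floorRoot_eq_one {k n : ℕ} : PowFree k n ↔ floorRoot k n = 1 := by
  simp only [PowFree, eq_one_iff_not_exists_prime_dvd, pow_dvd_iff_dvd_floorRoot]

end Nat

theorem sum_moebius_divisors_floorRoot (k n : ℕ) :
    ∑ d ∈ (Nat.floorRoot k n).divisors, μ d = if Nat.PowFree k n then 1 else 0 := by
  rw [Nat.powFree_iff_floorRoot_eq_one, ← coe_mul_zeta_apply, moebius_mul_coe_zeta, one_apply]
  congr

theorem card_filter_powFree_Icc {k : ℕ} (hk : k ≠ 0) (R : ℕ) :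
    (#{n ∈ Icc 1 R | Nat.PowFree k n} : ℤ) = ∑ d ∈ Icc 1 R, μ d * (R / d ^ k : ℕ) := by
  have hswap : ∀ n d, n ∈ Icc 1 R ∧ d ∈ (Nat.floorRoot k n).divisors ↔
      n ∈ {n ∈ Icc 1 R | d ^ k ∣ n} ∧ d ∈ Icc 1 R := by
    intro n d
    simp only [mem_filter, mem_Icc, Nat.mem_divisors, ← Nat.pow_dvd_iff_dvd_floorRoot, ne_eq,
      Nat.floorRoot_eq_zero, hk, false_or]
    constructor
    · rintro ⟨hn, hdn, -⟩
      have hd : d ∣ n := (dvd_pow_self d hk).trans hdn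
      exact ⟨⟨hn, hdn⟩, Nat.pos_of_dvd_of_pos hd hn.1, (Nat.le_of_dvd hn.1 hd).trans hn.2⟩
    · rintro ⟨⟨hn, hdn⟩, -⟩
      exact ⟨hn, hdn, by omega⟩
  calc (#{n ∈ Icc 1 R | Nat.PowFree k n} : ℤ)
      = ∑ n ∈ Icc 1 R, ∑ d ∈ (Nat.floorRoot k n).divisors, μ d := by
        simp only [sum_moebius_divisors_floorRoot, sum_boole]
    _ = ∑ d ∈ Icc 1 R, ∑ n ∈ Icc 1 R with d ^ k ∣ n, μ d := sum_comm' hswap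
    _ = ∑ d ∈ Icc 1 R, μ d * (R / d ^ k : ℕ) := by
        refine sum_congr rfl fun d _ => ?_
        rw [sum_const, ← zero_add 1, Icc_add_one_left_eq_Ioc, Nat.Ioc_filter_dvd_card_eq_div,
          nsmul_eq_mul, mul_comm]

theorem Nat.cast_div_div_self_le {α : Type*} [Field α] [LinearOrder α] [IsStrictOrderedRing α]
    (R m : ℕ) : ((R / m : ℕ) : α) / R ≤ 1 / m :=
  div_le_of_le_mul₀ R.cast_nonneg (by positivity)
    (by rw [one_div_mul_eq_div]; exact Nat.cast_div_le)

theorem Nat.tendsto_cast_div_div_self (m : ℕ) :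
    Tendsto (fun R : ℕ => ((R / m : ℕ) : ℝ) / R) atTop (𝓝 (1 / m)) := by
  refine ((tendsto_nat_floor_mul_div_atTop (a := (1 / m : ℝ)) (by positivity)).comp
    tendsto_natCast_atTop_atTop).congr fun R => ?_
  simp only [Function.comp_apply, one_div_mul_eq_div, Nat.floor_div_eq_div]

theorem tendsto_tsum_mul_nat_div_div {𝕜 : Type*} [RCLike 𝕜] (a : ℕ → 𝕜) (m : ℕ → ℕ)
    (ha : Summable fun d => ‖a d‖ / m d) :
    Tendsto (fun R : ℕ => (∑' d, a d * (R / m d : ℕ)) / R) atTop (𝓝 (∑' d, a d / m d)) := by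
  simp_rw [← tsum_div_const]
  refine tendsto_tsum_of_dominated_convergence ha (fun d => ?_) (.of_forall fun R d => ?_)
  · have := ((RCLike.continuous_ofReal (K := 𝕜)).tendsto _ |>.comp
      (Nat.tendsto_cast_div_div_self (m d))).const_mul (a d)
    convert this using 2 <;> simp [div_eq_mul_inv, mul_assoc]
  · rw [norm_div, norm_mul, RCLike.norm_natCast, RCLike.norm_natCast, mul_div_assoc,
      div_eq_mul_one_div (‖a d‖)]
    exact mul_le_mul_of_nonneg_left (Nat.cast_div_div_self_le R (m d)) (norm_nonneg _)

theorem LSeries_natCast_eq_tsum_div_pow {f : ℕ → ℂ} (hf : f 0 = 0) (k : ℕ) :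
    L f k = ∑' d, f d / (d : ℂ) ^ k := by
  refine tsum_congr fun d => ?_
  rcases eq_or_ne d 0 with rfl | hd
  · simp [hf]
  · rw [LSeries.term_of_ne_zero hd, Complex.cpow_natCast]

theorem LSeries_moebius_eq_one_div_riemannZeta {s : ℂ} (hs : 1 < s.re) :
    L ↗μ s = 1 / riemannZeta s :=
  eq_one_div_of_mul_eq_one_right <|
    LSeries_zeta_eq_riemannZeta hs ▸ LSeries_zeta_mul_Lseries_moebius hs

theorem summable_norm_moebius_div_pow {k : ℕ} (hk : 2 ≤ k) :
    Summable fun d : ℕ => ‖(μ d : ℂ)‖ / (d ^ k : ℕ) := by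
  refine (Real.summable_one_div_nat_pow.mpr hk).of_nonneg_of_le (fun d => by positivity) fun d => ?_
  rw [Complex.norm_intCast, Nat.cast_pow]
  gcongr
  exact_mod_cast abs_moebius_le_one

theorem tsum_moebius_mul_div_pow_eq_sum_Icc {k : ℕ} (hk : k ≠ 0) (R : ℕ) :
    ∑' d, (μ d : ℂ) * (R / d ^ k : ℕ) = ∑ d ∈ Icc 1 R, (μ d : ℂ) * (R / d ^ k : ℕ) := by
  refine tsum_eq_sum fun d hd => ?_
  rcases eq_or_ne d 0 with rfl | hd0
  · simp
  · have hRd : R < d ^ k := (not_le.mp fun h => hd (mem_Icc.mpr ⟨by omega, h⟩)).trans_le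
      (Nat.le_self_pow hk d)
    simp [Nat.div_eq_of_lt hRd]

/-- The natural density of the k-free integers equals 1/ζ(k) for k ≥ 2. -/
theorem kfree_density (k : ℕ) (hk : 2 ≤ k) :
    Tendsto
      (fun R : ℕ =>
        ((((Finset.Icc 1 R).filter
            (fun n => ∀ p : ℕ, p.Prime → ¬ p ^ k ∣ n)).card : ℂ) / (R : ℂ)))
      atTop (nhds (1 / riemannZeta (k : ℂ))) := by
  change Tendsto (fun R : ℕ => (#{n ∈ Icc 1 R | Nat.PowFree k n} : ℂ) / R) atTop _
  have hk0 : k ≠ 0 := by omega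
  have hk1 : 1 < (k : ℂ).re := by rw [Complex.natCast_re]; exact_mod_cast hk
  have hlim := tendsto_tsum_mul_nat_div_div (fun d => (μ d : ℂ)) (· ^ k)
    (summable_norm_moebius_div_pow hk)
  simp only [Nat.cast_pow] at hlim
  rw [← LSeries_natCast_eq_tsum_div_pow (by simp), LSeries_moebius_eq_one_div_riemannZeta hk1]
    at hlim
  refine hlim.congr fun R => ?_
  rw [tsum_moebius_mul_div_pow_eq_sum_Icc hk0]
  congr 1
  rw [← Int.cast_natCast, card_filter_powFree_Icc hk0 R]
  simp only [Int.cast_sum, Int.cast_mul, Int.cast_natCast]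
end

section
/- The set of visible points of ℤ² contains arbitrarily large square holes: for every N there exists t ∈ ℤ² such that no point of t + {0,…,N}² is visible. -/
/-!
Attach a distinct prime `p_{ij}` to every point `(i, j)` of the square. By the Chinese
Remainder Theorem there are `x, y` with `p_{ij} ∣ x + i` and `p_{ij} ∣ y + j` for all `i, j`,
so `p_{ij}` divides the gcd of the coordinates of `(x + i, y + j)`.
-/

open Function

theorem exists_forall_dvd_add {R ι : Type*} [CommRing R] [Finite ι] {m : ι → R}
    (hm : Pairwise (IsCoprime on m)) (c : ι → R) : ∃ x : R, ∀ i, m i ∣ x + c i := by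
  have hspan : Pairwise (IsCoprime on fun i ↦ Ideal.span {m i}) := fun i j hij ↦
    (Ideal.isCoprime_span_singleton_iff _ _).mpr (hm hij)
  obtain ⟨x, hx⟩ := Ideal.exists_forall_sub_mem_ideal hspan (-c)
  exact ⟨x, fun i ↦ by simpa [Ideal.mem_span_singleton] using hx i⟩

theorem exists_injective_prime (ι : Type*) [Countable ι] :
    ∃ p : ι → ℕ, (∀ i, (p i).Prime) ∧ Injective p := by
  obtain ⟨f, hf⟩ := Countable.exists_injective_nat ι
  exact ⟨Nat.nth Nat.Prime ∘ f, fun i ↦ Nat.prime_nth_prime _,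
    (Nat.nth_injective Nat.infinite_setOfPred_prime).comp hf⟩

theorem Int.gcd_ne_one_of_prime_dvd {p : ℕ} (hp : p.Prime) {a b : ℤ} (ha : (p : ℤ) ∣ a)
    (hb : (p : ℤ) ∣ b) : Int.gcd a b ≠ 1 := fun h ↦
  hp.not_dvd_one (h ▸ Int.dvd_gcd ha hb)

theorem exists_translate_forall_gcd_ne_one {ι : Type*} [Finite ι] (v : ι → ℤ × ℤ) :
    ∃ t : ℤ × ℤ, ∀ i, Int.gcd (t.1 + (v i).1) (t.2 + (v i).2) ≠ 1 := by
  obtain ⟨p, hp, hinj⟩ := exists_injective_prime ι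
  have hcop : Pairwise (IsCoprime on fun i ↦ (p i : ℤ)) := fun i j hij ↦
    Nat.isCoprime_iff_coprime.mpr <| (Nat.coprime_primes (hp i) (hp j)).mpr (hinj.ne hij)
  obtain ⟨x, hx⟩ := exists_forall_dvd_add hcop fun i ↦ (v i).1
  obtain ⟨y, hy⟩ := exists_forall_dvd_add hcop fun i ↦ (v i).2
  exact ⟨(x, y), fun i ↦ Int.gcd_ne_one_of_prime_dvd (hp i) (hx i) (hy i)⟩

/-- The visible points of ℤ² contain arbitrarily large square holes. -/
theorem visible_points_arbitrarily_large_holes (N : ℕ) :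
    ∃ t : ℤ × ℤ, ∀ i j : ℕ, i ≤ N → j ≤ N →
      Int.gcd (t.1 + (i : ℤ)) (t.2 + (j : ℤ)) ≠ 1 := by
  obtain ⟨t, ht⟩ := exists_translate_forall_gcd_ne_one
    fun ij : Fin (N + 1) × Fin (N + 1) ↦ ((ij.1 : ℤ), (ij.2 : ℤ))
  exact ⟨t, fun i j hi hj ↦ ht (⟨i, by omega⟩, ⟨j, by omega⟩)⟩
end

section
/- The set V of visible points of ℤ² is non-periodic: if t ∈ ℤ² satisfies t + V = V, then t = 0. -/
/-!
If `t + V = V`, then both `t + V ⊆ V` and `-t + V ⊆ V`. For any `s` with `s + V ⊆ V`, the visible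
point `(1, s₁ + 1 - s₂)` is moved to the diagonal point `(s₁ + 1, s₁ + 1)`, and the only visible
points on the diagonal are `±(1, 1)`; so `|s₁ + 1| = 1`, and likewise `|s₂ + 1| = 1`. Applied to
`s = t` and `s = -t` this leaves only `t = 0`.
-/

def visiblePoints : Set (ℤ × ℤ) := {v | Int.gcd v.1 v.2 = 1}

lemma natAbs_eq_one_of_mk_self_mem_visiblePoints {a : ℤ} (h : (a, a) ∈ visiblePoints) :
    a.natAbs = 1 := by
  simpa [visiblePoints, Int.gcd_self] using h

lemma natAbs_add_one_eq_one_of_forall_add_mem_visiblePoints {s : ℤ × ℤ}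
    (hs : ∀ v ∈ visiblePoints, s + v ∈ visiblePoints) :
    (s.1 + 1).natAbs = 1 ∧ (s.2 + 1).natAbs = 1 := by
  constructor <;> apply natAbs_eq_one_of_mk_self_mem_visiblePoints
  · convert hs (1, s.1 + 1 - s.2) (Int.gcd_one_left _) using 1
    ext <;> simp
  · convert hs (s.2 + 1 - s.1, 1) (Int.gcd_one_right _) using 1
    ext <;> simp

/-- The set of visible points of ℤ² is non-periodic. -/
theorem visible_points_nonperiodic (t : ℤ × ℤ)
    (h : (fun v : ℤ × ℤ => t + v) '' {v : ℤ × ℤ | Int.gcd v.1 v.2 = 1}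
          = {v : ℤ × ℤ | Int.gcd v.1 v.2 = 1}) :
    t = 0 := by
  change (t + ·) '' visiblePoints = visiblePoints at h
  have forward : ∀ v ∈ visiblePoints, t + v ∈ visiblePoints :=
    fun v hv => h ▸ ⟨v, hv, rfl⟩
  have backward : ∀ v ∈ visiblePoints, -t + v ∈ visiblePoints := by
    intro w hw
    rw [← h] at hw
    obtain ⟨v, hv, rfl⟩ := hw
    simpa using hv
  obtain ⟨h₁, h₂⟩ := natAbs_add_one_eq_one_of_forall_add_mem_visiblePoints forward
  obtain ⟨h₃, h₄⟩ := natAbs_add_one_eq_one_of_forall_add_mem_visiblePoints backward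
  simp only [Prod.fst_neg, Prod.snd_neg] at h₃ h₄
  ext <;> simp <;> omega
end

section
/- The set of squarefree integers is non-periodic: if t ∈ ℤ satisfies t + S = S where S is the set of squarefree integers, then t = 0. -/
/-!
A set of integers invariant under translation by `t` is invariant under translation by every
multiple of `t`. Since `1 + (6 + 9 t) t = (1 + 3 t) ^ 2` and `1 + 3 t` is a unit only for `t = 0`,
translating the squarefree integer `1` by `(6 + 9 t) t` leaves the squarefree integers unless `t = 0`.
-/

open Pointwise

theorem Set.zsmul_vadd_mem_of_vadd_eq {G : Type*} [AddGroup G] {S : Set G} {t : G}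
    (hS : t +ᵥ S = S) (k : ℤ) {x : G} (hx : x ∈ S) : k • t +ᵥ x ∈ S := by
  have hk : k • t ∈ AddAction.stabilizer G S :=
    zsmul_mem (AddAction.mem_stabilizer_iff.mpr hS) k
  rw [← AddAction.mem_stabilizer_iff.mp hk]
  exact Set.vadd_mem_vadd_set hx

/-- The set of squarefree integers is non-periodic. -/
theorem squarefree_nonperiodic (t : ℤ)
    (h : (fun n : ℤ => t + n) '' {n : ℤ | Squarefree n} = {n : ℤ | Squarefree n}) :
    t = 0 := by
  have hsq : Squarefree ((1 + 3 * t) ^ 2) := by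
    have hsq_eq : (1 + 3 * t) ^ 2 = (6 + 9 * t) • t +ᵥ (1 : ℤ) := by
      rw [smul_eq_mul, vadd_eq_add]
      ring
    rw [hsq_eq]
    exact Set.zsmul_vadd_mem_of_vadd_eq h (6 + 9 * t) squarefree_one
  have hunit : IsUnit (1 + 3 * t) := hsq _ (sq _).symm.dvd
  rcases Int.isUnit_iff.mp hunit with h1 | h1 <;> omega
end

section
/- Every finite admissible subset of ℤ is the restriction of some pattern realized by the squarefree integers: if F ⊆ ℤ is finite and for every prime p the image of F mod p² omits a residue class, then there exists t ∈ ℤ such that every element of t + F is squarefree. (Consequence: the orbit closure of the squarefree integers in {0,1}^ℤ equals the set of admissible configurations restricted to finite windows.) -/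
/-!
Put `B = 4 |F|` and `Q = ∏_{p ≤ B} p²`. The Chinese remainder theorem gives `r` with
`r + x ≢ 0 (mod p²)` for all primes `p ≤ B` and `x ∈ F`, and this persists along `t = r + Q k`.
The number of `k < M` for which some `t + x` is divisible by `p²` with `p > B` is at most
`|F| ∑_{B < p ≤ √K} (M / p² + 1) ≤ |F| (2M / (B + 1) + √K)`, where `K` bounds `|t + x|`.
As `K` grows linearly in `M`, this is less than `M` for large `M`, so some `k` works.
-/

open Finset Function

theorem exists_natCast_eq_of_pairwise_coprime {ι : Type*} {n : ι → ℕ} {t : Finset ι}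
    (hn : ∀ i ∈ t, n i ≠ 0) (hco : Set.Pairwise t (Nat.Coprime on n)) (a : ∀ i, ZMod (n i)) :
    ∃ r : ℕ, ∀ i ∈ t, (r : ZMod (n i)) = a i := by
  obtain ⟨r, hr⟩ := Nat.chineseRemainderOfFinset (fun i => (a i).val) n t hn hco
  refine ⟨r, fun i hi => ?_⟩
  have : NeZero (n i) := ⟨hn i hi⟩
  rw [← ZMod.natCast_zmod_val (a i), ZMod.natCast_eq_natCast_iff]
  exact hr i hi

theorem card_filter_dvd_add_mul_le {m Q : ℕ} (hm : 0 < m) (hQ : Q.Coprime m) (a : ℤ) (M : ℕ) :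
    #{k ∈ range M | (m : ℤ) ∣ a + Q * ((k : ℕ) : ℤ)} ≤ M / m + 1 := by
  have : NeZero m := ⟨hm.ne'⟩
  set u := ZMod.unitOfCoprime Q hQ
  -- the `k` with `m ∣ a + Q k` are those in the residue class of `-a Q⁻¹`
  set v := (-(a : ZMod m) * ↑u⁻¹).val
  have hv : ∀ k : ℕ, (m : ℤ) ∣ a + Q * k → k ≡ v [MOD m] := by
    intro k hk
    rw [← ZMod.intCast_zmod_eq_zero_iff_dvd] at hk
    push_cast at hk
    have hu : (Q : ZMod m) * ↑u⁻¹ = 1 := by rw [← ZMod.coe_unitOfCoprime Q hQ, Units.mul_inv]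
    rw [← ZMod.natCast_eq_natCast_iff, ZMod.natCast_zmod_val]
    linear_combination (↑u⁻¹ : ZMod m) * hk - (k : ZMod m) * hu
  calc #{k ∈ range M | (m : ℤ) ∣ a + Q * ((k : ℕ) : ℤ)} ≤ #{k ∈ range M | k ≡ v [MOD m]} :=
        card_le_card (monotone_filter_right _ fun k _ => hv k)
    _ = M / m + if v % m < M % m then 1 else 0 := by
        rw [← Nat.count_eq_card_filter_range, Nat.count_modEq_card M hm]
    _ ≤ M / m + 1 := by split_ifs <;> omega

theorem sum_inv_sq_le_of_forall_lt {α : Type*} [Field α] [LinearOrder α] [IsStrictOrderedRing α]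
    {P : Finset ℕ} {B : ℕ} (hP : ∀ p ∈ P, B < p) :
    ∑ p ∈ P, ((p : α) ^ 2)⁻¹ ≤ 2 / (B + 1) := by
  have hsub : P ⊆ Ioo B (P.sup id + 1) := fun p hp =>
    mem_Ioo.2 ⟨hP p hp, Nat.lt_succ_of_le (le_sup (f := id) hp)⟩
  exact (sum_le_sum_of_subset_of_nonneg hsub fun _ _ _ => by positivity).trans
    (sum_Ioo_inv_sq_le _ _)

theorem sum_div_sq_add_one_le {P : Finset ℕ} {B N : ℕ} (hP : P ⊆ Ioc B N) (M : ℕ) :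
    ((∑ p ∈ P, (M / p ^ 2 + 1) : ℕ) : ℚ) ≤ 2 * M / (B + 1) + N := by
  have hdiv : ∑ p ∈ P, ((M / p ^ 2 : ℕ) : ℚ) ≤ 2 * M / (B + 1) := by
    calc ∑ p ∈ P, ((M / p ^ 2 : ℕ) : ℚ) ≤ ∑ p ∈ P, M * ((p : ℚ) ^ 2)⁻¹ :=
          sum_le_sum fun p _ => Nat.cast_div_le.trans_eq (by push_cast; rfl)
      _ ≤ M * (2 / (B + 1)) := by
          rw [← mul_sum]
          gcongr
          exact sum_inv_sq_le_of_forall_lt fun p hp => (mem_Ioc.1 (hP hp)).1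
      _ = 2 * M / (B + 1) := by ring
  have hcard : (#P : ℚ) ≤ N := by
    exact_mod_cast (card_le_card hP).trans ((Nat.card_Ioc B N).trans_le (Nat.sub_le N B))
  push_cast
  rw [sum_add_distrib, sum_const, nsmul_one]
  linarith

theorem card_mul_sum_div_sq_add_one_lt {s B N M : ℕ} (hB : 4 * s ≤ B + 1) (hN : 2 * s * N < M)
    {P : Finset ℕ} (hP : P ⊆ Ioc B N) :
    s * ∑ p ∈ P, (M / p ^ 2 + 1) < M := by
  have hsum := sum_div_sq_add_one_le hP M
  have hBq : (4 * s : ℚ) ≤ B + 1 := by exact_mod_cast hB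
  have hNq : (2 * s * N : ℚ) < M := by exact_mod_cast hN
  have hhalf : (s : ℚ) * (2 * M / (B + 1)) ≤ M / 2 := by
    rw [mul_div_assoc', div_le_div_iff₀ (by positivity) two_pos]
    nlinarith
  have hlt : (s * ∑ p ∈ P, (M / p ^ 2 + 1) : ℕ) < (M : ℚ) := by
    push_cast at hsum ⊢
    nlinarith
  exact_mod_cast hlt

theorem card_filter_exists_sq_dvd_le (F : Finset ℤ) {P : Finset ℕ} (a : ℤ) {Q : ℕ}
    (hP : ∀ p ∈ P, 0 < p ∧ Q.Coprime (p ^ 2)) (M : ℕ) :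
    #{k ∈ range M | ∃ x ∈ F, ∃ p ∈ P, (p : ℤ) ^ 2 ∣ a + Q * ((k : ℕ) : ℤ) + x} ≤
      #F * ∑ p ∈ P, (M / p ^ 2 + 1) := by
  classical
  calc _ ≤ #((F ×ˢ P).biUnion fun q =>
          {k ∈ range M | ((q.2 ^ 2 : ℕ) : ℤ) ∣ (a + q.1) + Q * ((k : ℕ) : ℤ)}) := by
        refine card_le_card fun k hk => ?_
        obtain ⟨hkM, x, hx, p, hp, hdvd⟩ := mem_filter.1 hk
        refine mem_biUnion.2 ⟨(x, p), mem_product.2 ⟨hx, hp⟩, mem_filter.2 ⟨hkM, ?_⟩⟩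
        convert hdvd using 1 <;> push_cast <;> ring
    _ ≤ ∑ q ∈ F ×ˢ P, (M / q.2 ^ 2 + 1) := by
        refine card_biUnion_le.trans (sum_le_sum fun q hq => ?_)
        obtain ⟨hq0, hqQ⟩ := hP q.2 (mem_product.1 hq).2
        exact card_filter_dvd_add_mul_le (pow_pos hq0 2) hqQ _ M
    _ = #F * ∑ p ∈ P, (M / p ^ 2 + 1) := by simp only [sum_product, sum_const, smul_eq_mul]

theorem Int.exists_prime_sq_dvd_of_not_squarefree {y : ℤ} (hy : y ≠ 0) (h : ¬Squarefree y) :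
    ∃ p : ℕ, p.Prime ∧ (p : ℤ) ^ 2 ∣ y ∧ p ^ 2 ≤ y.natAbs := by
  rw [← Int.squarefree_natAbs, Nat.squarefree_iff_prime_squarefree] at h
  push Not at h
  obtain ⟨p, hp, hdvd⟩ := h
  rw [← sq] at hdvd
  exact ⟨p, hp, by exact_mod_cast Int.natCast_dvd.2 hdvd, Nat.le_of_dvd (Int.natAbs_pos.2 hy) hdvd⟩

theorem natAbs_add_mul_add_le {a x : ℤ} {Q k M : ℕ} (hk : k < M) :
    (a + Q * k + x).natAbs ≤ (a.natAbs + Q + x.natAbs) * M := by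
  have hQk : ((Q : ℤ) * k).natAbs ≤ Q * M := by
    rw [Int.natAbs_mul, Int.natAbs_natCast, Int.natAbs_natCast]
    exact Nat.mul_le_mul_left Q hk.le
  have hM : a.natAbs + x.natAbs ≤ (a.natAbs + x.natAbs) * M := Nat.le_mul_of_pos_right _ (by omega)
  have habs₁ := Int.natAbs_add_le (a + Q * k) x
  have habs₂ := Int.natAbs_add_le a (Q * k)
  have hexpand : (a.natAbs + Q + x.natAbs) * M = (a.natAbs + x.natAbs) * M + Q * M := by ring
  omega

theorem exists_forall_squarefree_add_mul_add (F : Finset ℤ) (a : ℤ) {Q B : ℕ}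
    (hB : 4 * #F ≤ B + 1)
    (hsmall : ∀ p ≤ B, p.Prime → ∀ k : ℕ, ∀ x ∈ F, ¬(p : ℤ) ^ 2 ∣ a + Q * k + x)
    (hlarge : ∀ p, B < p → p.Prime → Q.Coprime (p ^ 2)) :
    ∃ k : ℕ, ∀ x ∈ F, Squarefree (a + Q * k + x) := by
  classical
  set s := #F
  set D := a.natAbs + Q + F.sup Int.natAbs
  -- `D * M` bounds `|a + Q k + x|` for `k < M`, and `M` is chosen so that `2 s √(D M) < M`
  set M := 4 * s ^ 2 * D + 1
  set N := Nat.sqrt (D * M)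
  set P := {p ∈ Ioc B N | p.Prime}
  have hbound : ∀ k < M, ∀ x ∈ F, (a + Q * k + x).natAbs ≤ D * M := fun k hk x hx =>
    (natAbs_add_mul_add_le hk).trans <| Nat.mul_le_mul_right M <| by
      have := le_sup (f := Int.natAbs) hx
      omega
  have hbad : ∀ k < M, ∀ x ∈ F, ¬Squarefree (a + Q * k + x) →
      ∃ p ∈ P, (p : ℤ) ^ 2 ∣ a + Q * k + x := by
    intro k hk x hx hsq
    have h2B : 2 ≤ B := by have := card_pos.2 ⟨x, hx⟩; omega
    have hy : a + Q * k + x ≠ 0 := fun h0 => hsmall 2 h2B Nat.prime_two k x hx (h0 ▸ dvd_zero _)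
    obtain ⟨p, hp, hdvd, hle⟩ := Int.exists_prime_sq_dvd_of_not_squarefree hy hsq
    have hBp : B < p := by
      by_contra! hpB
      exact hsmall p hpB hp k x hx hdvd
    have hpN : p ≤ N := Nat.le_sqrt'.2 (hle.trans (hbound k hk x hx))
    exact ⟨p, mem_filter.2 ⟨mem_Ioc.2 ⟨hBp, hpN⟩, hp⟩, hdvd⟩
  have hN : 2 * s * N < M := by
    have hsq : (2 * s * N) ^ 2 < M ^ 2 :=
      calc (2 * s * N) ^ 2 = 4 * s ^ 2 * N ^ 2 := by ring
        _ ≤ 4 * s ^ 2 * (D * M) := Nat.mul_le_mul_left _ (Nat.sqrt_le' _)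
        _ < M * M := by
          rw [← mul_assoc]
          exact Nat.mul_lt_mul_of_pos_right (Nat.lt_succ_self _) (Nat.succ_pos _)
        _ = M ^ 2 := (sq M).symm
    exact lt_of_pow_lt_pow_left₀ 2 (Nat.zero_le _) hsq
  have hcount := card_mul_sum_div_sq_add_one_lt hB hN (filter_subset (·.Prime) (Ioc B N))
  have hP : ∀ p ∈ P, 0 < p ∧ Q.Coprime (p ^ 2) := fun p hp =>
    have ⟨hpI, hpp⟩ := mem_filter.1 hp
    ⟨hpp.pos, hlarge p (mem_Ioc.1 hpI).1 hpp⟩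
  obtain ⟨k, hkM, hk⟩ := exists_mem_notMem_of_card_lt_card
    ((card_filter_exists_sq_dvd_le F a hP M).trans_lt (hcount.trans_eq (card_range M).symm))
  refine ⟨k, fun x hx => by_contra fun hsq => hk (mem_filter.2 ⟨hkM, x, hx, ?_⟩)⟩
  exact hbad k (mem_range.1 hkM) x hx hsq

/-- Every finite admissible pattern is realized by the squarefree integers:
if F ⊆ ℤ is finite and for every prime p the image of F mod p² omits a residue class,
then some translate of F consists entirely of squarefree integers. -/
theorem admissible_pattern_realized (F : Finset ℤ)
    (hF : ∀ p : ℕ, p.Prime → ∃ c : ZMod (p ^ 2), ∀ x ∈ F, (x : ZMod (p ^ 2)) ≠ c) :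
    ∃ t : ℤ, ∀ x ∈ F, Squarefree (t + x) := by
  classical
  choose c hc using hF
  set B := 4 * #F
  set S := {p ∈ range (B + 1) | p.Prime}
  have hS : ∀ p ∈ S, p.Prime := fun p hp => (mem_filter.1 hp).2
  obtain ⟨r, hr⟩ := exists_natCast_eq_of_pairwise_coprime (n := (· ^ 2)) (t := S)
    (fun p hp => pow_ne_zero 2 (hS p hp).ne_zero)
    (fun p hp q hq hpq => ((Nat.coprime_primes (hS p hp) (hS q hq)).2 hpq).pow 2 2)
    (fun p => if hp : p.Prime then -c p hp else 0)
  set Q := ∏ p ∈ S, p ^ 2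
  have hsmall : ∀ p ≤ B, p.Prime → ∀ k : ℕ, ∀ x ∈ F, ¬(p : ℤ) ^ 2 ∣ r + Q * k + x := by
    intro p hpB hp k x hx hdvd
    have hpS : p ∈ S := mem_filter.2 ⟨mem_range.2 (Nat.lt_succ_of_le hpB), hp⟩
    have hQ : (Q : ZMod (p ^ 2)) = 0 := (ZMod.natCast_eq_zero_iff _ _).2 (dvd_prod_of_mem _ hpS)
    have hzero := (ZMod.intCast_zmod_eq_zero_iff_dvd _ (p ^ 2)).2 (by exact_mod_cast hdvd)
    push_cast at hzero
    rw [hr p hpS, dif_pos hp, hQ, zero_mul, add_zero, neg_add_eq_sub, sub_eq_zero] at hzero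
    exact hc p hp x hx hzero
  have hlarge : ∀ p, B < p → p.Prime → Q.Coprime (p ^ 2) := fun p hBp hp =>
    Nat.Coprime.prod_left fun q hq => ((Nat.coprime_primes (hS q hq) hp).2
      (((mem_range.1 (mem_filter.1 hq).1).trans_le hBp).ne)).pow 2 2
  obtain ⟨k, hk⟩ := exists_forall_squarefree_add_mul_add F r (Nat.le_succ _) hsmall hlarge
  exact ⟨r + Q * k, hk⟩
end

section
/- The dynamical system given by the orbit closure 𝕏 of the squarefree integers under ℤ-translation is proximal: for any X, Y ∈ 𝕏 and any R > 0 there exists t ∈ ℤ with (X + t) ∩ [-R,R] = (Y + t) ∩ [-R,R] = ∅. -/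
/-!
Every element of the hull agrees on any finite window with a shift `n ↦ Squarefree (n + s)`.
By the Chinese remainder theorem there is, for each `N`, a single modulus `M` (a product of
squares of distinct primes) such that every set of at most `N` integers has a whole residue
class mod `M` of translates consisting of non-squarefree numbers. Because `M` does not depend
on the set, one may fix the window `[0, M + 2R]` first, approximate `X` and `Y` on it by shifts
`s` and `u`, and only then pick the residue `a ∈ [0, M)` making all `a + i + s` and `a + i + u`,
`0 ≤ i ≤ 2R`, non-squarefree.
-/

/-- The orbit closure (hull) of the squarefree integers in {0,1}^ℤ under the
translation action of ℤ. -/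
def SqfHull : Set (ℤ → Bool) :=
  closure {f : ℤ → Bool | ∃ t : ℤ, ∀ n : ℤ, f n = true ↔ Squarefree (n + t)}

open Finset

theorem IsCoprime.exists_intModEq_and_intModEq {m n : ℤ} (h : IsCoprime m n) (a b : ℤ) :
    ∃ c, c ≡ a [ZMOD m] ∧ c ≡ b [ZMOD n] := by
  obtain ⟨u, v, huv⟩ := h
  refine ⟨a * (v * n) + b * (u * m), Int.modEq_iff_dvd.mpr ⟨(a - b) * u, ?_⟩,
    Int.modEq_iff_dvd.mpr ⟨(b - a) * v, ?_⟩⟩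
  · linear_combination -a * huv
  · linear_combination -b * huv

theorem exists_prime_mul_self_isCoprime {M : ℤ} (hM : M ≠ 0) :
    ∃ p : ℤ, Prime p ∧ IsCoprime (p * p) M := by
  obtain ⟨p, hlt, hp⟩ := Nat.exists_infinite_primes (M.natAbs + 1)
  have hcop : IsCoprime (p : ℤ) M := Int.isCoprime_iff_nat_coprime.mpr <|
    hp.coprime_iff_not_dvd.mpr (Nat.not_dvd_of_pos_of_lt (Int.natAbs_pos.mpr hM) hlt)
  exact ⟨p, Nat.prime_iff_prime_int.mp hp, hcop.mul_left hcop⟩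

theorem exists_modulus_forall_modEq_not_squarefree (N : ℕ) :
    ∃ M : ℤ, 0 < M ∧ ∀ F : Finset ℤ, #F ≤ N →
      ∃ c, ∀ a, a ≡ c [ZMOD M] → ∀ n ∈ F, ¬ Squarefree (a + n) := by
  induction N with
  | zero =>
    refine ⟨1, one_pos, fun F hF => ⟨0, fun a _ n hn => ?_⟩⟩
    simp [card_eq_zero.mp (Nat.le_zero.mp hF)] at hn
  | succ N ih =>
    obtain ⟨M, hM, hres⟩ := ih
    obtain ⟨p, hp, hcop⟩ := exists_prime_mul_self_isCoprime hM.ne'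
    refine ⟨M * (p * p), mul_pos hM (mul_self_pos.mpr hp.ne_zero), fun F hF => ?_⟩
    rcases F.eq_empty_or_nonempty with rfl | ⟨n₀, hn₀⟩
    · exact ⟨0, by simp⟩
    obtain ⟨c₀, hc₀⟩ := hres (F.erase n₀) (by rw [card_erase_of_mem hn₀]; omega)
    obtain ⟨c, hcM, hcp⟩ := hcop.symm.exists_intModEq_and_intModEq c₀ (-n₀)
    refine ⟨c, fun a ha n hn hsq => ?_⟩
    rcases eq_or_ne n n₀ with rfl | hne
    · have hdvd : p * p ∣ a + n := Int.modEq_zero_iff_dvd.mp <| by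
        simpa using ((Int.ModEq.of_mul_left M ha).trans hcp).add_right n
      exact hp.not_isUnit (hsq p hdvd)
    · exact hc₀ a ((Int.ModEq.of_mul_right _ ha).trans hcM) n (mem_erase.mpr ⟨hne, hn⟩) hsq

theorem exists_shift_squarefree_iff_of_mem_sqfHull {X : ℤ → Bool} (hX : X ∈ SqfHull)
    (W : Finset ℤ) : ∃ s, ∀ n ∈ W, (X n = true ↔ Squarefree (n + s)) := by
  have hopen : IsOpen ((W : Set ℤ).pi fun n => {X n}) :=
    isOpen_set_pi W.finite_toSet fun _ _ => isOpen_discrete _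
  obtain ⟨f, hfW, s, hs⟩ := mem_closure_iff.mp hX _ hopen (Set.mem_pi.mpr fun _ _ => rfl)
  exact ⟨s, fun n hn => (hfW n hn).symm ▸ hs n⟩

theorem sqfHull_proximal_general (X Y : ℤ → Bool) (hX : X ∈ SqfHull) (hY : Y ∈ SqfHull) (R : ℤ) :
    ∃ t : ℤ, ∀ n : ℤ, -R ≤ n → n ≤ R → X (n - t) = false ∧ Y (n - t) = false := by
  set I := Icc 0 (2 * R)
  obtain ⟨M, hM, hres⟩ := exists_modulus_forall_modEq_not_squarefree (#I + #I)
  set W := Icc 0 (M + 2 * R)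
  obtain ⟨s, hs⟩ := exists_shift_squarefree_iff_of_mem_sqfHull hX W
  obtain ⟨u, hu⟩ := exists_shift_squarefree_iff_of_mem_sqfHull hY W
  obtain ⟨c, hc⟩ := hres (I.image (· + s) ∪ I.image (· + u))
    (card_union_le _ _ |>.trans (add_le_add card_image_le card_image_le))
  set a := c % M
  have hlo : 0 ≤ a := Int.emod_nonneg c hM.ne'
  have hhi : a < M := Int.emod_lt_of_pos c hM
  refine ⟨-(a + R), fun n hn₁ hn₂ => ?_⟩
  have hI : n + R ∈ I := mem_Icc.mpr ⟨by omega, by omega⟩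
  have hW : n - -(a + R) ∈ W := mem_Icc.mpr ⟨by omega, by omega⟩
  have hshift (v : ℤ) : n - -(a + R) + v = a + (n + R + v) := by ring
  constructor
  · refine Bool.eq_false_iff.mpr fun h => hc a (Int.mod_modEq c M) _
      (mem_union_left _ (mem_image_of_mem _ hI)) ?_
    simpa only [hshift] using (hs _ hW).mp h
  · refine Bool.eq_false_iff.mpr fun h => hc a (Int.mod_modEq c M) _
      (mem_union_right _ (mem_image_of_mem _ hI)) ?_
    simpa only [hshift] using (hu _ hW).mp h

/-- The hull of the squarefree integers is proximal: any two elements can be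
simultaneously translated so as to vanish on any given window [-R,R]. -/
theorem sqfHull_proximal (X Y : ℤ → Bool) (hX : X ∈ SqfHull) (hY : Y ∈ SqfHull)
    (R : ℤ) (hR : 0 < R) :
    ∃ t : ℤ, ∀ n : ℤ, -R ≤ n → n ≤ R → X (n - t) = false ∧ Y (n - t) = false :=
  sqfHull_proximal_general X Y hX hY R
end

section
/- {∅} is the unique minimal closed ℤ-invariant subset of the orbit closure 𝕏 of the squarefree integers; equivalently, every nonempty closed ℤ-invariant subset of 𝕏 contains the empty configuration. -/
theorem Int.exists_modEq_and_modEq {m n : ℤ} (h : IsCoprime m n) (a b : ℤ) :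
    ∃ x, x ≡ a [ZMOD m] ∧ x ≡ b [ZMOD n] := by
  obtain ⟨u, v, huv⟩ := h
  refine ⟨a * v * n + b * u * m, ?_, ?_⟩ <;> rw [Int.modEq_iff_dvd]
  · exact ⟨(a - b) * u, by linear_combination (-a) * huv⟩
  · exact ⟨(b - a) * v, by linear_combination (-b) * huv⟩

theorem exists_modEq_not_squarefree_run (N : ℕ) :
    ∃ (r : ℤ) (P : ℕ), 0 < P ∧
      ∀ m : ℤ, m ≡ r [ZMOD P] → ∀ n ∈ Finset.Ico m (m + N), ¬ Squarefree n := by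
  induction N with
  | zero => exact ⟨0, 1, one_pos, by simp⟩
  | succ N ih =>
    obtain ⟨r, P, hP, hrun⟩ := ih
    obtain ⟨q, hPq, hq⟩ := Nat.exists_infinite_primes (P + 1)
    have hcop : Nat.Coprime P (q ^ 2) :=
      (((Nat.Prime.coprime_iff_not_dvd hq).2 (Nat.not_dvd_of_pos_of_lt hP hPq)).symm).pow_right 2
    obtain ⟨r', hr'P, hr'q⟩ :=
      Int.exists_modEq_and_modEq (Nat.isCoprime_iff_coprime.2 hcop) r (-N)
    refine ⟨r', P * q ^ 2, Nat.mul_pos hP (pow_pos hq.pos 2), fun m hm n hn => ?_⟩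
    push_cast at hm hn
    rw [Finset.mem_Ico] at hn
    obtain hlt | rfl : n < m + N ∨ n = m + N := by omega
    · exact hrun m ((hm.of_mul_right _).trans hr'P) n (Finset.mem_Ico.2 ⟨hn.1, hlt⟩)
    · have hdvd : (q : ℤ) * q ∣ m + N := by
        rw [← sq, ← Int.modEq_zero_iff_dvd]
        simpa using ((hm.of_mul_left _).trans hr'q).add_right (N : ℤ)
      exact fun hsq => (Nat.prime_iff_prime_int.mp hq).not_isUnit (hsq _ hdvd)

def falseRunWithin (P N : ℤ) : Set (ℤ → Bool) :=
  {g | ∃ x ∈ Finset.Ico 0 P, ∀ n ∈ Finset.Ico x (x + N), g n = false}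

theorem isClosed_falseRunWithin (P N : ℤ) : IsClosed (falseRunWithin P N) := by
  have : falseRunWithin P N =
      ⋃ x ∈ Finset.Ico 0 P, ⋂ n ∈ Finset.Ico x (x + N), {g : ℤ → Bool | g n = false} := by
    ext; simp [falseRunWithin]
  rw [this]
  refine (Finset.finite_toSet _).isClosed_biUnion fun x _ => isClosed_biInter fun n _ => ?_
  exact isClosed_eq (continuous_apply n) continuous_const

theorem exists_sqfHull_subset_falseRunWithin (N : ℕ) :
    ∃ P : ℤ, SqfHull ⊆ falseRunWithin P N := by
  obtain ⟨r, P, hP, hrun⟩ := exists_modEq_not_squarefree_run N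
  refine ⟨P, closure_minimal ?_ (isClosed_falseRunWithin _ _)⟩
  rintro f ⟨t, hf⟩
  have hP' : (P : ℤ) ≠ 0 := by exact_mod_cast hP.ne'
  refine ⟨(r - t) % P, Finset.mem_Ico.2 ⟨Int.emod_nonneg _ hP', Int.emod_lt_of_pos _ (by omega)⟩,
    fun n hn => ?_⟩
  have hstart : (r - t) % P + t ≡ r [ZMOD P] := by
    simpa using (Int.mod_modEq (r - t) P).add_right t
  rw [Bool.eq_false_iff, ne_eq, hf]
  exact hrun _ hstart (n + t) (by simp only [Finset.mem_Ico] at hn ⊢; omega)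

theorem const_mem_of_forall_exists_run {α : Type*} [TopologicalSpace α] {Y : Set (ℤ → α)}
    (hcl : IsClosed Y) (hinv : ∀ f ∈ Y, ∀ t : ℤ, (fun n : ℤ => f (n + t)) ∈ Y)
    {y : ℤ → α} (hy : y ∈ Y) {a : α}
    (hrun : ∀ N : ℕ, ∃ x : ℤ, ∀ n ∈ Finset.Ico x (x + N), y n = a) :
    (fun _ : ℤ => a) ∈ Y := by
  choose x hx using fun N : ℕ => hrun (2 * N + 1)
  -- the `N`-th shift vanishes on `[-N, N]`
  have hshift : Filter.Tendsto (fun N : ℕ => fun n : ℤ => y (n + (x N + N))) Filter.atTop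
      (nhds fun _ => a) := by
    refine tendsto_pi_nhds.2 fun n => tendsto_const_nhds.congr' ?_
    filter_upwards [Filter.eventually_ge_atTop n.natAbs] with N hN
    exact (hx N _ (Finset.mem_Ico.2 (by push_cast; omega))).symm
  exact hcl.mem_of_tendsto hshift (Filter.Eventually.of_forall fun N => hinv y hy _)

/-- Every nonempty closed ℤ-invariant subset of the hull of the squarefree
integers contains the empty configuration; i.e. {∅} is the unique minimal
subsystem. -/
theorem sqfHull_unique_minimal (Y : Set (ℤ → Bool)) (hYX : Y ⊆ SqfHull)
    (hne : Y.Nonempty) (hcl : IsClosed Y)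
    (hinv : ∀ f ∈ Y, ∀ t : ℤ, (fun n : ℤ => f (n + t)) ∈ Y) :
    (fun _ : ℤ => false) ∈ Y := by
  obtain ⟨y, hy⟩ := hne
  refine const_mem_of_forall_exists_run hcl hinv hy fun N => ?_
  obtain ⟨P, hP⟩ := exists_sqfHull_subset_falseRunWithin N
  obtain ⟨x, -, hx⟩ := hP (hYX hy)
  exact ⟨x, hx⟩
end

section
/- Any continuous eigenfunction of the translation action on the orbit closure 𝕏 of the squarefree integers is constant: if f : 𝕏 → ℂ is continuous, f ≢ 0, and there exist λ_t ∈ ℂ with f(X - t) = λ_t f(X) for all X ∈ 𝕏 and t ∈ ℤ, then λ_t = 1 for all t and f is constant. In particular the system has trivial topological point spectrum. -/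
open Set Topology

section Eigenfunction

variable {G α 𝕜 : Type*} [NormedField 𝕜] {K : Set α} {T : G → α → α} {f : α → 𝕜} {lam : G → 𝕜}

theorem eigenvalue_mul_eq_one {s t : G} (hinv : ∀ x ∈ K, T s (T t x) = x) (hT : MapsTo (T t) K K)
    (heig : ∀ t, ∀ x ∈ K, f (T t x) = lam t * f x) (hne : ∃ x ∈ K, f x ≠ 0) :
    lam s * lam t = 1 := by
  obtain ⟨x₀, hx₀, hfx₀⟩ := hne
  refine mul_right_cancel₀ hfx₀ ?_
  calc lam s * lam t * f x₀ = f (T s (T t x₀)) := by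
        rw [heig s _ (hT hx₀), heig t x₀ hx₀, mul_assoc]
    _ = 1 * f x₀ := by rw [hinv x₀ hx₀, one_mul]

variable [TopologicalSpace α]

theorem norm_eigenvalue_le_one (hK : IsCompact K) (hT : ∀ t, MapsTo (T t) K K)
    (hf : ContinuousOn f K) (heig : ∀ t, ∀ x ∈ K, f (T t x) = lam t * f x)
    (hne : ∃ x ∈ K, f x ≠ 0) (t : G) : ‖lam t‖ ≤ 1 := by
  obtain ⟨x₀, hx₀, hfx₀⟩ := hne
  obtain ⟨x₁, hx₁, hmax⟩ := hK.exists_isMaxOn ⟨x₀, hx₀⟩ hf.norm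
  have hpos : 0 < ‖f x₁‖ := (norm_pos_iff.2 hfx₀).trans_le (hmax hx₀)
  refine (mul_le_iff_le_one_left hpos).1 ?_
  calc ‖lam t‖ * ‖f x₁‖ = ‖f (T t x₁)‖ := by rw [heig t x₁ hx₁, norm_mul]
    _ ≤ ‖f x₁‖ := hmax (hT t hx₁)

theorem norm_eigenvalue_eq_one (hK : IsCompact K) (hT : ∀ t, MapsTo (T t) K K)
    (hinv : ∀ t, ∃ s, ∀ x ∈ K, T s (T t x) = x) (hf : ContinuousOn f K)
    (heig : ∀ t, ∀ x ∈ K, f (T t x) = lam t * f x) (hne : ∃ x ∈ K, f x ≠ 0) (t : G) :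
    ‖lam t‖ = 1 := by
  obtain ⟨s, hs⟩ := hinv t
  have hle := norm_eigenvalue_le_one hK hT hf heig hne
  refine (hle t).antisymm ?_
  calc 1 = ‖lam s‖ * ‖lam t‖ := by
        rw [← norm_mul, eigenvalue_mul_eq_one hs (hT t) heig hne, norm_one]
    _ ≤ ‖lam t‖ := mul_le_of_le_one_left (norm_nonneg _) (hle s)

theorem ContinuousOn.apply_eq_of_mem_closure_orbit {β : Type*} [TopologicalSpace β] [T2Space β]
    {g : α → β} (hg : ContinuousOn g K) (hT : ∀ t, MapsTo (T t) K K) {x : α} (hx : x ∈ K)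
    (hgx : ∀ t, g (T t x) = g x) {z : α} (hz : z ∈ K) (hzx : z ∈ closure (range fun t => T t x)) :
    g z = g x := by
  have horb : range (fun t => T t x) ⊆ K := range_subset_iff.2 fun t => hT t hx
  have hEq : EqOn g (fun _ => g x) (range fun t => T t x) := by
    rintro _ ⟨t, rfl⟩
    exact hgx t
  exact hEq.of_subset_closure (hg.mono inter_subset_left) continuousOn_const
    (subset_inter horb subset_closure) inter_subset_right ⟨hz, hzx⟩

theorem eigenvalue_eq_one_and_eq_of_fixed_mem_closure_orbit (hK : IsCompact K)
    (hT : ∀ t, MapsTo (T t) K K) (hinv : ∀ t, ∃ s, ∀ x ∈ K, T s (T t x) = x)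
    (hf : ContinuousOn f K) (heig : ∀ t, ∀ x ∈ K, f (T t x) = lam t * f x)
    (hne : ∃ x ∈ K, f x ≠ 0) {z : α} (hz : z ∈ K) (hfix : ∀ t, T t z = z)
    (horb : ∀ x ∈ K, z ∈ closure (range fun t => T t x)) :
    (∀ t, lam t = 1) ∧ ∀ x ∈ K, f x = f z := by
  have hnorm (x) (hx : x ∈ K) : ‖f z‖ = ‖f x‖ := by
    refine hf.norm.apply_eq_of_mem_closure_orbit hT hx (fun t => ?_) hz (horb x hx)
    rw [heig t x hx, norm_mul, norm_eigenvalue_eq_one hK hT hinv hf heig hne, one_mul]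
  have hfz : f z ≠ 0 := by
    obtain ⟨x₀, hx₀, hfx₀⟩ := hne
    rwa [← norm_ne_zero_iff, hnorm x₀ hx₀, norm_ne_zero_iff]
  have hlam (t) : lam t = 1 := by
    refine mul_right_cancel₀ hfz ?_
    rw [← heig t z hz, hfix, one_mul]
  refine ⟨hlam, fun x hx => ?_⟩
  refine (hf.apply_eq_of_mem_closure_orbit hT hx (fun t => ?_) hz (horb x hx)).symm
  rw [heig t x hx, hlam, one_mul]

end Eigenfunction

theorem exists_sq_dvd_add (S : Finset ℤ) :
    ∃ r N : ℤ, 0 < N ∧ ∀ n ∈ S, ∃ d : ℤ, ¬IsUnit d ∧ d * d ∣ N ∧ d * d ∣ r + n := by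
  classical
  induction S using Finset.induction_on with
  | empty => exact ⟨0, 1, one_pos, by simp⟩
  | insert k S _ ih =>
    obtain ⟨r, N, hN, hS⟩ := ih
    obtain ⟨p, hpN, hp⟩ := Nat.exists_infinite_primes (N.natAbs + 1)
    have hpZ : Prime (p : ℤ) := Nat.prime_iff_prime_int.mp hp
    have hpN : ¬(p : ℤ) ∣ N := fun h => by
      have := Nat.le_of_dvd (by omega) (Int.natCast_dvd.mp h)
      omega
    have hcop : IsCoprime (p : ℤ) N := hpZ.coprime_iff_not_dvd.2 hpN
    obtain ⟨a, b, hab⟩ := (hcop.symm.mul_right hcop.symm)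
    -- `r' ≡ r (mod N)` and `r' ≡ -k (mod p²)`
    refine ⟨r + N * (a * (-k - r)), N * (p * p), mul_pos hN (by have := hp.pos; positivity), ?_⟩
    rintro n hn
    rcases Finset.mem_insert.1 hn with rfl | hn
    · refine ⟨p, hpZ.not_isUnit, Dvd.intro_left _ rfl, ⟨(r + n) * b, ?_⟩⟩
      linear_combination (-(r + n)) * hab
    · obtain ⟨d, hd, hdN, hdr⟩ := hS n hn
      refine ⟨d, hd, hdN.mul_right _, ?_⟩
      rw [add_right_comm]
      exact hdr.add (hdN.mul_right _)

theorem isClosed_setOf_exists_mem_Ico_forall_eq (N : ℤ) (S : Finset ℤ) (b : Bool) :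
    IsClosed {X : ℤ → Bool | ∃ s ∈ Finset.Ico 0 N, ∀ n ∈ S, X (n + s) = b} := by
  have : {X : ℤ → Bool | ∃ s ∈ Finset.Ico 0 N, ∀ n ∈ S, X (n + s) = b} =
      ⋃ s ∈ Finset.Ico 0 N, ⋂ n ∈ S, {X | X (n + s) = b} := by
    ext; simp only [mem_ofPred_eq, mem_iUnion, mem_iInter, exists_prop]
  rw [this]
  exact isClosed_biUnion_finset fun s _ => isClosed_biInter fun n _ =>
    isClosed_eq (continuous_apply _) continuous_const

theorem exists_forall_eq_false_of_mem_sqfHull (S : Finset ℤ) {X : ℤ → Bool} (hX : X ∈ SqfHull) :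
    ∃ s, ∀ n ∈ S, X (n + s) = false := by
  obtain ⟨r, N, hN, hS⟩ := exists_sq_dvd_add S
  suffices SqfHull ⊆ {X : ℤ → Bool | ∃ s ∈ Finset.Ico 0 N, ∀ n ∈ S, X (n + s) = false} by
    obtain ⟨s, -, hs⟩ := this hX
    exact ⟨s, hs⟩
  refine closure_minimal ?_ (isClosed_setOf_exists_mem_Ico_forall_eq N S false)
  rintro Y ⟨t, hY⟩
  refine ⟨(r - t) % N, Finset.mem_Ico.2 ⟨Int.emod_nonneg _ hN.ne', Int.emod_lt_of_pos _ hN⟩,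
    fun n hn => ?_⟩
  obtain ⟨d, hd, hdN, hdr⟩ := hS n hn
  rw [← Bool.not_eq_true, hY]
  refine fun hsq => hd (hsq d ?_)
  have : n + (r - t) % N + t = r + n - N * ((r - t) / N) := by
    have := Int.emod_add_mul_ediv (r - t) N
    linarith
  rw [this]
  exact hdr.sub (hdN.mul_right _)

theorem isClosed_sqfHull : IsClosed SqfHull := isClosed_closure

theorem isCompact_sqfHull : IsCompact SqfHull := isClosed_sqfHull.isCompact

theorem mapsTo_shift_sqfHull (t : ℤ) :
    MapsTo (fun (X : ℤ → Bool) n => X (n + t)) SqfHull SqfHull := by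
  refine MapsTo.closure (fun X ⟨s, hX⟩ => ⟨t + s, fun n => ?_⟩)
    (continuous_pi fun n => continuous_apply (n + t))
  rw [hX, add_assoc]

theorem false_mem_closure_orbit_of_mem_sqfHull {X : ℤ → Bool} (hX : X ∈ SqfHull) :
    (fun _ => false) ∈ closure (range fun (t : ℤ) n => X (n + t)) := by
  rw [mem_closure_iff_nhds]
  intro U hU
  rw [nhds_pi, Filter.mem_pi'] at hU
  obtain ⟨S, V, hV, hVU⟩ := hU
  obtain ⟨s, hs⟩ := exists_forall_eq_false_of_mem_sqfHull S hX
  exact ⟨_, hVU fun n hn => by simp only [hs n hn]; exact mem_of_mem_nhds (hV n), s, rfl⟩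

open scoped Classical in
theorem false_mem_sqfHull : (fun _ => false) ∈ SqfHull := by
  have hsqf : (fun n => decide (Squarefree n)) ∈ SqfHull :=
    subset_closure ⟨0, fun n => by simp⟩
  exact closure_minimal (range_subset_iff.2 fun t => mapsTo_shift_sqfHull t hsqf) isClosed_sqfHull
    (false_mem_closure_orbit_of_mem_sqfHull hsqf)

/-- Any continuous eigenfunction of the translation action on the hull of the
squarefree integers has eigenvalue 1 and is constant: the system has trivial
topological point spectrum. -/
theorem sqfHull_trivial_point_spectrum (f : (ℤ → Bool) → ℂ)
    (hf : ContinuousOn f SqfHull)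
    (hne : ∃ X ∈ SqfHull, f X ≠ 0)
    (lam : ℤ → ℂ)
    (heig : ∀ t : ℤ, ∀ X ∈ SqfHull, f (fun n : ℤ => X (n + t)) = lam t * f X) :
    (∀ t : ℤ, lam t = 1) ∧ ∀ X ∈ SqfHull, ∀ Y ∈ SqfHull, f X = f Y := by
  have hinv (t : ℤ) : ∃ s, ∀ X ∈ SqfHull, (fun n => X (n + s + t)) = X :=
    ⟨-t, fun X _ => by simp⟩
  obtain ⟨hlam, hconst⟩ := eigenvalue_eq_one_and_eq_of_fixed_mem_closure_orbit
    isCompact_sqfHull mapsTo_shift_sqfHull hinv hf heig hne false_mem_sqfHull (fun _ => rfl)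
    fun _ => false_mem_closure_orbit_of_mem_sqfHull
  exact ⟨hlam, fun X hX Y hY => (hconst X hX).trans (hconst Y hY).symm⟩
end

section
/- For squarefree integers, the density of the set {t ∈ ℤ : t + F ⊆ S} for a finite admissible set F ⊆ ℤ equals ∏_p (1 − |F mod p²|/p²), where S is the set of squarefree integers and the product runs over all primes; in particular this density is positive. -/
/-!
Sieve by the squares of the primes of a finite set `s`. Whether `p² ∤ t + x` for all `p ∈ s` and
`x ∈ F` depends only on `t` modulo `∏_{p ∈ s} p²`, and by the Chinese remainder theorem it holds
on exactly `∏_{p ∈ s} (p² - |F mod p²|)` residues, so these `t` have density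
`∏_{p ∈ s} (1 - |F mod p²|/p²)`. A sifted `t ∈ [-R, R]` with `t + F` not squarefree has either
`t + x = 0` for some `x ∈ F` (at most `|F|` such `t`) or `p² ∣ t + x` for a prime `p ∉ s` with
`p² ≤ 2R`; there are at most `2(2R + 1)|F| ∑_{p ∉ s} 1/p²` of the latter, a proportion of
`[-R, R]` that tends to `0` as `s` exhausts the primes. Admissibility makes every Euler factor positive, and
`∑_p |F mod p²|/p² ≤ |F| ∑_p 1/p² < ∞`, so the product converges to a positive limit.
-/

open Filter
open scoped Classical
open Finset Function Topology

theorem Int.abs_card_filter_Icc_modEq_sub_le (a b v : ℤ) {n : ℕ} (hn : 0 < n) (hab : a ≤ b + 1) :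
    |(#{t ∈ Icc a b | t ≡ v [ZMOD n]} : ℝ) - (b - a + 1) / n| ≤ 1 := by
  have hcount := Int.Ico_filter_modEq_card a (b + 1) (r := n) (by exact_mod_cast hn) v
  rw [Ico_add_one_right_eq_Icc] at hcount
  set X : ℚ := ((b + 1 : ℤ) - v) / (n : ℤ)
  set Y : ℚ := (a - v) / (n : ℤ)
  have hXY : X - Y = (b - a + 1) / n := by simp only [X, Y]; push_cast; ring
  have hXY0 : 0 ≤ X - Y := by
    rw [hXY]; exact div_nonneg (by exact_mod_cast (by omega : 0 ≤ b - a + 1)) n.cast_nonneg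
  have hq : |(#{t ∈ Icc a b | t ≡ v [ZMOD n]} : ℚ) - (X - Y)| ≤ 1 := by
    have hc : (#{t ∈ Icc a b | t ≡ v [ZMOD n]} : ℚ) = ((max (⌈X⌉ - ⌈Y⌉) 0 : ℤ) : ℚ) := by
      exact_mod_cast hcount
    have hX := Int.ceil_lt_add_one X
    have hY := Int.ceil_lt_add_one Y
    rw [hc, abs_le]
    push_cast
    constructor
    · linarith [le_max_left ((⌈X⌉ : ℚ) - ⌈Y⌉) 0, Int.le_ceil X]
    · exact sub_le_iff_le_add.mpr (max_le (by linarith [Int.le_ceil Y]) (by linarith))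
  rw [hXY] at hq
  exact_mod_cast hq

theorem Int.card_filter_Icc_dvd_add_le (a b x : ℤ) {n : ℕ} (hn : 0 < n) (hnab : n ≤ b - a + 1) :
    (#{t ∈ Icc a b | (n : ℤ) ∣ t + x} : ℝ) ≤ 2 * (b - a + 1) / n := by
  have h := Int.abs_card_filter_Icc_modEq_sub_le a b (-x) hn (by omega)
  rw [filter_congr fun t _ => by rw [Int.modEq_comm, Int.modEq_iff_dvd, sub_neg_eq_add]] at h
  have hn' : (0 : ℝ) < n := by exact_mod_cast hn
  have hone : 1 ≤ ((b - a + 1 : ℤ) : ℝ) / n := (one_le_div hn').mpr (by exact_mod_cast hnab)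
  push_cast at hone
  rw [mul_div_assoc]
  linarith [(abs_le.mp h).2]

theorem tendsto_div_two_mul_of_abs_sub_le {u : ℕ → ℝ} {c K : ℝ}
    (hu : ∀ R, |u R - (2 * R + 1) * c| ≤ K) :
    Tendsto (fun R : ℕ => u R / (2 * R)) atTop (𝓝 c) := by
  have hK : Tendsto (fun R : ℕ => (|c| + K) / (2 * R)) atTop (𝓝 0) :=
    tendsto_const_nhds.div_atTop (tendsto_natCast_atTop_atTop.const_mul_atTop two_pos)
  rw [tendsto_iff_dist_tendsto_zero]
  refine squeeze_zero' (Eventually.of_forall fun R => dist_nonneg) ?_ hK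
  filter_upwards [eventually_gt_atTop 0] with R hR
  have hR' : (0 : ℝ) < 2 * R := by positivity
  rw [Real.dist_eq, div_sub' hR'.ne', abs_div, abs_of_pos hR', div_le_div_iff_of_pos_right hR']
  calc |u R - 2 * R * c| = |(u R - (2 * R + 1) * c) + c| := by ring_nf
    _ ≤ |u R - (2 * R + 1) * c| + |c| := abs_add_le _ _
    _ ≤ |c| + K := by linarith [hu R]

theorem tendsto_card_filter_Icc_intCast_mem_div {N : ℕ} [NeZero N] (S : Finset (ZMod N)) :
    Tendsto (fun R : ℕ => (#{t ∈ Icc (-(R : ℤ)) (R : ℤ) | ((t : ℤ) : ZMod N) ∈ S} : ℝ) / (2 * R))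
      atTop (𝓝 (#S / N)) := by
  refine tendsto_div_two_mul_of_abs_sub_le (K := #S) fun R => ?_
  have hfiber : #{t ∈ Icc (-(R : ℤ)) (R : ℤ) | ((t : ℤ) : ZMod N) ∈ S}
      = ∑ v ∈ S, #{t ∈ Icc (-(R : ℤ)) (R : ℤ) | t ≡ (v.cast : ℤ) [ZMOD N]} := by
    refine (card_eq_sum_card_fiberwise (f := fun t : ℤ => (t : ZMod N))
      (fun t ht => (mem_filter.mp ht).2)).trans (sum_congr rfl fun v hv => congrArg card ?_)
    ext t
    simp only [mem_filter, ← ZMod.intCast_eq_intCast_iff, ZMod.intCast_cast, ZMod.cast_id', id]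
    constructor
    · rintro ⟨⟨ht, -⟩, rfl⟩; exact ⟨ht, rfl⟩
    · rintro ⟨ht, rfl⟩; exact ⟨⟨ht, hv⟩, rfl⟩
  have hN : 0 < N := Nat.pos_of_ne_zero (NeZero.ne N)
  calc |(#{t ∈ Icc (-(R : ℤ)) (R : ℤ) | ((t : ℤ) : ZMod N) ∈ S} : ℝ) - (2 * R + 1) * (#S / N)|
      = |∑ v ∈ S, ((#{t ∈ Icc (-(R : ℤ)) (R : ℤ) | t ≡ (v.cast : ℤ) [ZMOD N]} : ℝ)
          - (((R : ℤ) : ℝ) - ((-(R : ℤ) : ℤ) : ℝ) + 1) / N)| := by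
        rw [hfiber, Nat.cast_sum, sum_sub_distrib, sum_const, nsmul_eq_mul]
        push_cast; ring_nf
    _ ≤ ∑ v ∈ S, (1 : ℝ) := (abs_sum_le_sum_abs _ _).trans (sum_le_sum fun v _ =>
        Int.abs_card_filter_Icc_modEq_sub_le (-(R : ℤ)) R _ hN (by omega))
    _ = #S := by simp

theorem Int.exists_prime_sq_dvd_of_not_squarefree_s18 {z : ℤ} (hz : z ≠ 0) (h : ¬ Squarefree z) :
    ∃ p : Nat.Primes, ((p : ℕ) : ℤ) ^ 2 ∣ z ∧ (p : ℕ) ^ 2 ≤ z.natAbs := by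
  rw [← Int.squarefree_natAbs, Nat.squarefree_iff_prime_squarefree] at h
  push Not at h
  obtain ⟨p, hp, hdvd⟩ := h
  rw [← sq] at hdvd
  exact ⟨⟨p, hp⟩, by exact_mod_cast Int.natCast_dvd.mpr hdvd,
    Nat.le_of_dvd (Int.natAbs_pos.mpr hz) hdvd⟩

theorem Real.multipliable_one_sub_of_summable {ι : Type*} {a : ι → ℝ} (ha : Summable a) :
    Multipliable fun i => 1 - a i := by
  simpa only [sub_eq_add_neg] using Real.multipliable_one_add_of_summable ha.neg

theorem Real.tprod_one_sub_pos {ι : Type*} {a : ι → ℝ} (ha : Summable a) (ha1 : ∀ i, a i < 1) :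
    0 < ∏' i, (1 - a i) := by
  have hlog : Summable fun i => Real.log (1 - a i) := by
    simpa only [sub_eq_add_neg] using Real.summable_log_one_add_of_summable ha.neg
  rw [← Real.rexp_tsum_eq_tprod (fun i => sub_pos.mpr (ha1 i)) hlog]
  exact Real.exp_pos _

theorem tendsto_of_forall_dist_le {α β X : Type*} [PseudoMetricSpace X] {la : Filter α}
    {lb : Filter β} [lb.NeBot] {a : α → X} {b : β → α → X} {P : β → X} {L : X}
    {g : β → α → ℝ} {e : β → ℝ}
    (hb : ∀ y, Tendsto (b y) la (𝓝 (P y))) (hg : ∀ y, Tendsto (g y) la (𝓝 (e y)))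
    (hP : Tendsto P lb (𝓝 L)) (he : Tendsto e lb (𝓝 0))
    (hab : ∀ y, ∀ᶠ R in la, dist (a R) (b y R) ≤ g y R) :
    Tendsto a la (𝓝 L) := by
  refine Metric.tendsto_nhds.mpr fun ε hε => ?_
  obtain ⟨y, hPy, hey⟩ := ((Metric.tendsto_nhds.mp hP (ε / 4) (by positivity)).and
    (he.eventually (gt_mem_nhds (show (0 : ℝ) < ε / 4 by positivity)))).exists
  filter_upwards [hab y, Metric.tendsto_nhds.mp (hb y) (ε / 4) (by positivity),
    (hg y).eventually (gt_mem_nhds (show e y < ε / 2 by linarith))] with R hab hbR hgR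
  calc dist (a R) L ≤ dist (a R) (b y R) + dist (b y R) (P y) + dist (P y) L :=
        dist_triangle4 _ _ _ _
    _ < ε := by linarith

theorem Real.dist_div_le_div_of_le_of_le_add {A C D r : ℝ} (hAC : A ≤ C) (hCA : C ≤ A + D)
    (hr : 0 ≤ r) : dist (A / r) (C / r) ≤ D / r := by
  rw [Real.dist_eq, ← sub_div, abs_div, abs_of_nonneg hr, abs_sub_comm,
    abs_of_nonneg (sub_nonneg.mpr hAC)]
  gcongr
  linarith

theorem Nat.Primes.summable_one_div_sq : Summable fun p : Nat.Primes => 1 / ((p : ℕ) : ℝ) ^ 2 :=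
  (Real.summable_one_div_nat_pow.mpr one_lt_two).comp_injective Subtype.val_injective

theorem Nat.Primes.sum_one_div_sq_le_tsum_compl {s T : Finset Nat.Primes} (hT : ∀ p ∈ T, p ∉ s) :
    ∑ p ∈ T, 1 / ((p : ℕ) : ℝ) ^ 2 ≤ ∑' p : {p : Nat.Primes // p ∉ s}, 1 / ((p : ℕ) : ℝ) ^ 2 := by
  rw [← sum_subtype_of_mem _ hT]
  exact (summable_one_div_sq.subtype _).sum_le_tsum _ fun _ _ => by positivity

theorem Nat.Primes.pairwise_coprime_sq (s : Finset Nat.Primes) :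
    Pairwise (Nat.Coprime on fun p : s => (p : ℕ) ^ 2) := fun p q hpq =>
  Nat.Coprime.pow 2 2 <| (Nat.coprime_primes p.1.2 q.1.2).mpr fun h =>
    hpq (Subtype.ext (Subtype.ext h))

noncomputable def residueCount (F : Finset ℤ) (n : ℕ) : ℕ :=
  #(F.image (fun x : ℤ => (x : ZMod n)))

theorem residueCount_le (F : Finset ℤ) (n : ℕ) [NeZero n] : residueCount F n ≤ n :=
  (card_le_univ _).trans (ZMod.card n).le

theorem card_filter_forall_add_ne_zero (F : Finset ℤ) (n : ℕ) [NeZero n] :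
    #{r : ZMod n | ∀ x ∈ F, r + x ≠ 0} = n - residueCount F n := by
  have hfilter : ({r : ZMod n | ∀ x ∈ F, r + x ≠ 0} : Finset (ZMod n))
      = univ \ (F.image (fun x : ℤ => (x : ZMod n))).image Neg.neg := by
    ext r
    simp [add_eq_zero_iff_eq_neg, eq_comm]
  rw [hfilter, card_sdiff_of_subset (subset_univ _), card_univ, ZMod.card,
    card_image_of_injective _ neg_injective, residueCount]

theorem summable_residueCount_div_sq (F : Finset ℤ) :
    Summable fun p : Nat.Primes => (residueCount F ((p : ℕ) ^ 2) : ℝ) / ((p : ℕ) : ℝ) ^ 2 :=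
  Summable.of_nonneg_of_le (fun _ => by positivity)
    (fun p => by rw [mul_one_div]; gcongr; exact card_image_le)
    (Nat.Primes.summable_one_div_sq.mul_left (#F : ℝ))

def SiftedBy (s : Finset Nat.Primes) (F : Finset ℤ) (t : ℤ) : Prop :=
  ∀ p ∈ s, ∀ x ∈ F, ¬ ((p : ℕ) : ℤ) ^ 2 ∣ t + x

theorem siftedBy_of_forall_squarefree {s : Finset Nat.Primes} {F : Finset ℤ} {t : ℤ}
    (h : ∀ x ∈ F, Squarefree (t + x)) : SiftedBy s F t := fun p _ x hx hdvd =>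
  (Nat.prime_iff_prime_int.mp p.2).not_isUnit (h x hx _ (by rwa [sq] at hdvd))

theorem tendsto_card_siftedBy_div (s : Finset Nat.Primes) (F : Finset ℤ) :
    Tendsto (fun R : ℕ => (#{t ∈ Icc (-(R : ℤ)) (R : ℤ) | SiftedBy s F t} : ℝ) / (2 * R))
      atTop (𝓝 (∏ p ∈ s, (1 - (residueCount F ((p : ℕ) ^ 2) : ℝ) / ((p : ℕ) : ℝ) ^ 2))) := by
  set e := ZMod.prodEquivPi _ (Nat.Primes.pairwise_coprime_sq s)
  have : NeZero (∏ p : s, (p : ℕ) ^ 2) :=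
    ⟨prod_ne_zero_iff.mpr fun p _ => pow_ne_zero 2 p.1.2.ne_zero⟩
  have (p : s) : NeZero ((p : ℕ) ^ 2) := ⟨pow_ne_zero 2 p.1.2.ne_zero⟩
  -- the residues of the sifted `t` modulo `∏ p²`: a product set under the Chinese remainder map
  set S := (Fintype.piFinset fun p : s =>
    ({r : ZMod ((p : ℕ) ^ 2) | ∀ x ∈ F, r + x ≠ 0} : Finset _)).map e.toEquiv.symm.toEmbedding
  have hmem (t : ℤ) : SiftedBy s F t ↔ ((t : ℤ) : ZMod (∏ p : s, (p : ℕ) ^ 2)) ∈ S := by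
    simp only [S, mem_map_equiv, Fintype.mem_piFinset, mem_filter, mem_univ, true_and,
      Equiv.symm_symm, RingEquiv.toEquiv_eq_coe, RingEquiv.coe_toEquiv, map_intCast,
      Pi.intCast_apply, ← Int.cast_add, ne_eq, ZMod.intCast_zmod_eq_zero_iff_dvd, Nat.cast_pow,
      Subtype.forall, SiftedBy]
  have hcard : (#S : ℝ) / (∏ p : s, (p : ℕ) ^ 2 : ℕ)
      = ∏ p ∈ s, (1 - (residueCount F ((p : ℕ) ^ 2) : ℝ) / ((p : ℕ) : ℝ) ^ 2) := by
    rw [card_map, Fintype.card_piFinset, ← prod_coe_sort s, Nat.cast_prod, Nat.cast_prod,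
      ← prod_div_distrib]
    refine prod_congr rfl fun p _ => ?_
    rw [card_filter_forall_add_ne_zero, Nat.cast_sub (residueCount_le F _), one_sub_div]
    · push_cast; rfl
    · exact pow_ne_zero 2 (Nat.cast_ne_zero.mpr p.1.2.ne_zero)
  rw [← hcard]
  refine (tendsto_card_filter_Icc_intCast_mem_div S).congr fun R => ?_
  rw [filter_congr fun t _ => (hmem t).symm]

theorem filter_siftedBy_subset {s T : Finset Nat.Primes} {F : Finset ℤ} {R M : ℕ}
    (hM : ∀ x ∈ F, x.natAbs ≤ M) (hMR : M ≤ R)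
    (hT : ∀ p : Nat.Primes, p ∉ s → (p : ℕ) ^ 2 ≤ 2 * R → p ∈ T) :
    {t ∈ Icc (-(R : ℤ)) (R : ℤ) | SiftedBy s F t}
      ⊆ {t ∈ Icc (-(R : ℤ)) (R : ℤ) | ∀ x ∈ F, Squarefree (t + x)} ∪ F.image Neg.neg
        ∪ F.biUnion fun x => T.biUnion fun p =>
            {t ∈ Icc (-(R : ℤ)) (R : ℤ) | ((p : ℕ) : ℤ) ^ 2 ∣ t + x} := by
  intro t ht
  obtain ⟨htI, hsift⟩ := mem_filter.mp ht
  by_cases hsq : ∀ x ∈ F, Squarefree (t + x)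
  · exact mem_union_left _ (mem_union_left _ (mem_filter.mpr ⟨htI, hsq⟩))
  push Not at hsq
  obtain ⟨x, hx, hx'⟩ := hsq
  by_cases h0 : t + x = 0
  · exact mem_union_left _ (mem_union_right _ (mem_image.mpr ⟨x, hx, by omega⟩))
  obtain ⟨p, hdvd, hp⟩ := Int.exists_prime_sq_dvd_of_not_squarefree_s18 h0 hx'
  have hp2R : (p : ℕ) ^ 2 ≤ 2 * R := by
    have := hM x hx
    rw [mem_Icc] at htI
    omega
  have hpT := hT p (fun hps => hsift p hps x hx hdvd) hp2R
  exact mem_union_right _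
    (mem_biUnion.mpr ⟨x, hx, mem_biUnion.mpr ⟨p, hpT, mem_filter.mpr ⟨htI, hdvd⟩⟩⟩)

theorem card_siftedBy_le (s : Finset Nat.Primes) (F : Finset ℤ) {R M : ℕ}
    (hM : ∀ x ∈ F, x.natAbs ≤ M) (hMR : M ≤ R) :
    (#{t ∈ Icc (-(R : ℤ)) (R : ℤ) | SiftedBy s F t} : ℝ)
      ≤ #{t ∈ Icc (-(R : ℤ)) (R : ℤ) | ∀ x ∈ F, Squarefree (t + x)}
        + (#F + 2 * (2 * R + 1) * #F *
            ∑' p : {p : Nat.Primes // p ∉ s}, 1 / ((p : ℕ) : ℝ) ^ 2) := by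
  set I := Icc (-(R : ℤ)) (R : ℤ)
  set T : Finset Nat.Primes := ((range (2 * R + 1)).subtype Nat.Prime).filter
    fun p => p ∉ s ∧ (p : ℕ) ^ 2 ≤ 2 * R
  have hT (p : Nat.Primes) (hps : p ∉ s) (hp : (p : ℕ) ^ 2 ≤ 2 * R) : p ∈ T :=
    mem_filter.mpr ⟨mem_subtype.mpr (mem_range.mpr (by
      have := Nat.le_self_pow two_ne_zero (p : ℕ); omega)), hps, hp⟩
  have hcount (x : ℤ) (p : Nat.Primes) (hp : p ∈ T) :
      (#{t ∈ I | ((p : ℕ) : ℤ) ^ 2 ∣ t + x} : ℝ) ≤ 2 * (2 * R + 1) * (1 / ((p : ℕ) : ℝ) ^ 2) := by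
    have h := Int.card_filter_Icc_dvd_add_le (-(R : ℤ)) R x (n := (p : ℕ) ^ 2)
      (pow_pos p.2.pos 2) (by have := (mem_filter.mp hp).2.2; omega)
    push_cast at h
    rw [mul_one_div]
    convert h using 2; ring
  have hunion : #{t ∈ I | SiftedBy s F t} ≤ #{t ∈ I | ∀ x ∈ F, Squarefree (t + x)} + #F
      + ∑ x ∈ F, ∑ p ∈ T, #{t ∈ I | ((p : ℕ) : ℤ) ^ 2 ∣ t + x} :=
    calc _ ≤ _ := card_le_card (filter_siftedBy_subset hM hMR hT)
      _ ≤ _ := card_union_le _ _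
      _ ≤ _ := by
          gcongr
          · exact (card_union_le _ _).trans (Nat.add_le_add_left card_image_le _)
          · exact card_biUnion_le.trans (sum_le_sum fun x _ => card_biUnion_le)
  calc (#{t ∈ I | SiftedBy s F t} : ℝ) ≤ #{t ∈ I | ∀ x ∈ F, Squarefree (t + x)} + #F
        + ∑ x ∈ F, ∑ p ∈ T, (#{t ∈ I | ((p : ℕ) : ℤ) ^ 2 ∣ t + x} : ℝ) := by
        exact_mod_cast hunion
    _ ≤ #{t ∈ I | ∀ x ∈ F, Squarefree (t + x)} + #F
        + ∑ x ∈ F, ∑ p ∈ T, 2 * (2 * R + 1) * (1 / ((p : ℕ) : ℝ) ^ 2) := by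
        gcongr with x _ p hp; exact hcount x p hp
    _ = #{t ∈ I | ∀ x ∈ F, Squarefree (t + x)}
        + (#F + 2 * (2 * R + 1) * #F * ∑ p ∈ T, 1 / ((p : ℕ) : ℝ) ^ 2) := by
        rw [sum_const, ← mul_sum, nsmul_eq_mul]; ring
    _ ≤ _ := by
        gcongr
        exact Nat.Primes.sum_one_div_sq_le_tsum_compl fun p hp => (mem_filter.mp hp).2.1

/-- The frequency (density) of translates t with t + F ⊆ S, for a finite
admissible set F, equals ∏_p (1 − |F mod p²|/p²) over all primes, and is
positive. -/
theorem squarefree_patch_frequency (F : Finset ℤ)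
    (hF : ∀ p : ℕ, p.Prime →
      (F.image (fun x : ℤ => (x : ZMod (p ^ 2)))).card < p ^ 2) :
    Tendsto
      (fun R : ℕ =>
        (((Finset.Icc (-(R : ℤ)) (R : ℤ)).filter
            (fun t => ∀ x ∈ F, Squarefree (t + x))).card : ℝ) / (2 * R))
      atTop
      (nhds (∏' p : Nat.Primes,
        (1 - ((F.image (fun x : ℤ => (x : ZMod ((p : ℕ) ^ 2)))).card : ℝ) / (p : ℕ) ^ 2))) ∧
    0 < ∏' p : Nat.Primes,
        (1 - ((F.image (fun x : ℤ => (x : ZMod ((p : ℕ) ^ 2)))).card : ℝ) / (p : ℕ) ^ 2) := by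
  have hf := summable_residueCount_div_sq F
  have hf1 (p : Nat.Primes) : (residueCount F ((p : ℕ) ^ 2) : ℝ) / ((p : ℕ) : ℝ) ^ 2 < 1 :=
    (div_lt_one (by have := p.2.pos; positivity)).mpr (by exact_mod_cast hF p p.2)
  refine ⟨?_, Real.tprod_one_sub_pos hf hf1⟩
  obtain ⟨M, hM⟩ : ∃ M, ∀ x ∈ F, x.natAbs ≤ M := ⟨F.sup Int.natAbs, fun x hx => le_sup hx⟩
  refine tendsto_of_forall_dist_le (lb := atTop) (tendsto_card_siftedBy_div · F)
    (g := fun s R => (#F + 2 * (2 * R + 1) * #F *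
      ∑' p : {p : Nat.Primes // p ∉ s}, 1 / ((p : ℕ) : ℝ) ^ 2) / (2 * R))
    (fun s => tendsto_div_two_mul_of_abs_sub_le (K := #F) fun R => ?_)
    (Real.multipliable_one_sub_of_summable hf).hasProd
    (by simpa using (tendsto_tsum_compl_atTop_zero fun p : Nat.Primes =>
      1 / ((p : ℕ) : ℝ) ^ 2).const_mul (2 * (#F : ℝ))) fun s => ?_
  · ring_nf; simp
  · filter_upwards [eventually_ge_atTop M] with R hR
    have hle := card_le_card (monotone_filter_right (Icc (-(R : ℤ)) (R : ℤ))
      fun t _ => siftedBy_of_forall_squarefree (s := s) (F := F) (t := t))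
    exact Real.dist_div_le_div_of_le_of_le_add (by exact_mod_cast hle)
      (card_siftedBy_le s F hM hR) (by positivity)
end
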